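/- Let M ≥ 1, N > 0, P₁,…,P_M ≥ 0, and let q₁ ≥ q₂ ≥ … ≥ q_M be weights in [0,1]. Then ∑_{i=1}^{M} qᵢ · log(1 + Pᵢ/(N + ∑_{j=i+1}^{M} Pⱼ)) ≤ q₁ · log(1 + (∑ᵢ Pᵢ)/N). -/
import Mathlib


/-- Weighted successive-decoding rate bound: for nonincreasing weights `qᵢ ∈ [0,1]`,
`∑_{i=1}^{M} qᵢ·log(1 + Pᵢ/(N + ∑_{j>i} Pⱼ)) ≤ q₁·log(1 + (∑ᵢ Pᵢ)/N)`. -/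
theorem stmt9 (M : ℕ) (hM : 1 ≤ M) (N : ℝ) (hN : 0 < N)
    (P : ℕ → ℝ) (hP : ∀ i, 0 ≤ P i)
    (q : ℕ → ℝ) (hq01 : ∀ i, q i ∈ Set.Icc (0:ℝ) 1)
    (hqmono : ∀ i j, i ≤ j → q j ≤ q i) :
    ∑ i ∈ Finset.range M,
        q i * Real.log (1 + P i / (N + ∑ j ∈ Finset.Ico (i + 1) M, P j))
      ≤ q 0 * Real.log (1 + (∑ i ∈ Finset.range M, P i) / N) := by
  have hApos : ∀ i, 0 < N + ∑ j ∈ Finset.Ico i M, P j := by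
    intro i
    have : 0 ≤ ∑ j ∈ Finset.Ico i M, P j := Finset.sum_nonneg fun j _ => hP j
    linarith
  set A : ℕ → ℝ := fun i => Real.log (N + ∑ j ∈ Finset.Ico i M, P j) with hA
  have hterm : ∀ i ∈ Finset.range M,
      Real.log (1 + P i / (N + ∑ j ∈ Finset.Ico (i + 1) M, P j))
        = A i - A (i + 1) := by
    intro i hi
    rw [Finset.mem_range] at hi
    have h1 : (N + ∑ j ∈ Finset.Ico i M, P j)
        = (N + ∑ j ∈ Finset.Ico (i + 1) M, P j) + P i := by
      rw [Finset.sum_eq_sum_Ico_succ_bot hi]; ring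
    have h2 : (1 : ℝ) + P i / (N + ∑ j ∈ Finset.Ico (i + 1) M, P j)
        = (N + ∑ j ∈ Finset.Ico i M, P j) / (N + ∑ j ∈ Finset.Ico (i + 1) M, P j) := by
      rw [h1, add_div, div_self (ne_of_gt (hApos (i + 1)))]
    rw [h2, hA]
    exact Real.log_div (ne_of_gt (hApos i)) (ne_of_gt (hApos (i + 1)))
  have htnonneg : ∀ i ∈ Finset.range M,
      0 ≤ Real.log (1 + P i / (N + ∑ j ∈ Finset.Ico (i + 1) M, P j)) := by
    intro i _
    apply Real.log_nonneg
    have : 0 ≤ P i / (N + ∑ j ∈ Finset.Ico (i + 1) M, P j) :=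
      div_nonneg (hP i) (le_of_lt (hApos (i + 1)))
    linarith
  calc ∑ i ∈ Finset.range M,
        q i * Real.log (1 + P i / (N + ∑ j ∈ Finset.Ico (i + 1) M, P j))
      ≤ ∑ i ∈ Finset.range M,
        q 0 * Real.log (1 + P i / (N + ∑ j ∈ Finset.Ico (i + 1) M, P j)) := by
        apply Finset.sum_le_sum
        intro i hi
        exact mul_le_mul_of_nonneg_right (hqmono 0 i (Nat.zero_le i)) (htnonneg i hi)
    _ = q 0 * ∑ i ∈ Finset.range M, (A i - A (i + 1)) := by
        rw [← Finset.mul_sum, Finset.sum_congr rfl hterm]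
    _ = q 0 * Real.log (1 + (∑ i ∈ Finset.range M, P i) / N) := by
        rw [Finset.sum_range_sub' A M]
        congr 1
        have hAM : A M = Real.log N := by simp [hA]
        have hA0 : A 0 = Real.log (N + ∑ i ∈ Finset.range M, P i) := by
          simp [hA, Finset.sum_Ico_eq_sum_range]
        have hS0 : 0 < N + ∑ i ∈ Finset.range M, P i := by
          have : 0 ≤ ∑ i ∈ Finset.range M, P i := Finset.sum_nonneg fun i _ => hP i
          linarith
        rw [hAM, hA0, ← Real.log_div (ne_of_gt hS0) (ne_of_gt hN)]
        congr 1
        field_simp
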